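/- Let (Ω, F, μ) be a probability space, let Z₀, Z₁ : Ω → H be square-integrable random variables taking values in a real Hilbert space H, let m_C ≤ F be a sub-σ-algebra (generated by the text condition C), and fix t ∈ (0,1). Define the interpolated state Z_t := (1-t)•Z₀ + t•Z₁ and the target velocity U_t := Z₁ - Z₀, and let m := σ(Z_t) ⊔ m_C be the σ-algebra generated by Z_t together with m_C. Then the expected conditional variance of the velocity satisfies ∫ ‖U_t - μ[U_t | m]‖² dμ ≤ (1-t)⁻² · ∫ ‖Z₁ - μ[Z₁ | m_C]‖² dμ. That is, the irreducible conditional-variance term of flow matching E[Var(u_t | z_t, t, C)] is bounded above by (1-t)⁻² times the conditional dispersion of the endpoint E[‖z₁ - E[z₁|C]‖²]. -/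

import Mathlib

open MeasureTheory

/-!
Given `Z_t` and `C`, the velocity is determined by the endpoint: `U_t = (Z₁ - Z_t) / (1 - t)`.
Replacing `Z₁` by its best `C`-measurable guess `E[Z₁|C]` gives the `σ(Z_t) ⊔ m_C`-measurable
predictor `(E[Z₁|C] - Z_t) / (1 - t)` of `U_t`, whose mean squared error is
`(1 - t)⁻² E‖Z₁ - E[Z₁|C]‖²`. Since the conditional expectation is the orthogonal projection
onto `L²(σ(Z_t) ⊔ m_C)`, it does at least as well as this predictor.
-/

namespace MeasureTheory

variable {Ω : Type*} {m mΩ : MeasurableSpace Ω} {μ : Measure Ω}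

theorem AEStronglyMeasurable.of_measurable {β : Type*} [TopologicalSpace β]
    [TopologicalSpace.PseudoMetrizableSpace β] [MeasurableSpace β] [BorelSpace β] [Zero β]
    {f : Ω → β} (hf : AEStronglyMeasurable f μ) (hfm : Measurable[m] f) :
    AEStronglyMeasurable[m] f μ := by
  -- `f` is a.e. valued in the closed separable set `s`; off the null set `f ⁻¹' sᶜ` set it to `0`.
  obtain ⟨g, hg, hfg⟩ := hf
  set s := closure (Set.range g)
  have hs : MeasurableSet[m] (f ⁻¹' s) := hfm isClosed_closure.measurableSet
  refine ⟨(f ⁻¹' s).indicator f, ?_, ?_⟩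
  · refine stronglyMeasurable_iff_measurable_separable.mpr ⟨hfm.indicator hs, ?_⟩
    refine ((Set.finite_singleton 0).isSeparable.union hg.isSeparable_range.closure).mono ?_
    rintro _ ⟨ω, rfl⟩
    by_cases hω : ω ∈ f ⁻¹' s
    · exact Or.inr (by rwa [Set.indicator_of_mem hω])
    · exact Or.inl (by rw [Set.indicator_of_notMem hω]; rfl)
  · filter_upwards [hfg] with ω hω
    have hmem : ω ∈ f ⁻¹' s := by
      rw [Set.mem_preimage, hω]; exact subset_closure (Set.mem_range_self ω)
    exact (Set.indicator_of_mem hmem f).symm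

section InnerProductSpace

variable {E : Type*} [NormedAddCommGroup E] [InnerProductSpace ℝ E]

theorem MemLp.integral_norm_sq_eq {f : Ω → E} (hf : MemLp f 2 μ) :
    ∫ ω, ‖f ω‖ ^ 2 ∂μ = ‖hf.toLp f‖ ^ 2 :=
  calc ∫ ω, ‖f ω‖ ^ 2 ∂μ = ∫ ω, inner ℝ (hf.toLp f ω) (hf.toLp f ω) ∂μ :=
        integral_congr_ae <| hf.coeFn_toLp.mono fun ω hω => by
          simp only [hω, real_inner_self_eq_norm_sq]
    _ = ‖hf.toLp f‖ ^ 2 := by rw [← L2.inner_def, real_inner_self_eq_norm_sq]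

theorem integral_norm_sub_condExp_sq_le [CompleteSpace E] [IsFiniteMeasure μ] (hm : m ≤ mΩ)
    {f g : Ω → E} (hf : MemLp f 2 μ) (hg : MemLp g 2 μ) (hgm : AEStronglyMeasurable[m] g μ) :
    ∫ ω, ‖f ω - μ[f|m] ω‖ ^ 2 ∂μ ≤ ∫ ω, ‖f ω - g ω‖ ^ 2 ∂μ := by
  have hfm : MemLp (μ[f|m]) 2 μ := hf.condExp one_le_two
  have hP : hfm.toLp _ = condExpL2 E ℝ hm (hf.toLp f) :=
    Lp.ext (hfm.coeFn_toLp.trans (hf.condExpL2_ae_eq_condExp hm).symm)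
  have hG : hg.toLp g ∈ lpMeas E ℝ m 2 μ :=
    mem_lpMeas_iff_aestronglyMeasurable.mpr (hgm.congr hg.coeFn_toLp.symm)
  have : Fact (m ≤ mΩ) := ⟨hm⟩
  have hmin : ‖hf.toLp f - condExpL2 E ℝ hm (hf.toLp f)‖ ≤ ‖hf.toLp f - hg.toLp g‖ := by
    change ‖_ - ((lpMeas E ℝ m 2 μ).orthogonalProjectionOnto (hf.toLp f) : Lp E 2 μ)‖ ≤ _
    rw [← Submodule.starProjection_apply, Submodule.starProjection_minimal]
    exact ciInf_le ⟨0, Set.forall_mem_range.mpr fun _ => norm_nonneg _⟩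
      (⟨hg.toLp g, hG⟩ : lpMeas E ℝ m 2 μ)
  calc ∫ ω, ‖f ω - μ[f|m] ω‖ ^ 2 ∂μ = ‖hf.toLp f - hfm.toLp _‖ ^ 2 := by
        rw [← MemLp.toLp_sub]; exact (hf.sub hfm).integral_norm_sq_eq
    _ ≤ ‖hf.toLp f - hg.toLp g‖ ^ 2 := by rw [hP]; gcongr
    _ = ∫ ω, ‖f ω - g ω‖ ^ 2 ∂μ := by
        rw [← MemLp.toLp_sub]; exact (hf.sub hg).integral_norm_sq_eq.symm

end InnerProductSpace

end MeasureTheory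

theorem flow_matching_irreducible_error_bound_general
    {Ω H : Type*} {mΩ : MeasurableSpace Ω} {μ : Measure Ω} [IsProbabilityMeasure μ]
    [NormedAddCommGroup H] [InnerProductSpace ℝ H] [CompleteSpace H]
    [MeasurableSpace H] [BorelSpace H]
    {mC : MeasurableSpace Ω}
    {Z₀ Z₁ : Ω → H} (hZ₀ : MemLp Z₀ 2 μ) (hZ₁ : MemLp Z₁ 2 μ)
    {t : ℝ} (ht : t ∈ Set.Ioo (0 : ℝ) 1)
    (Zt Ut : Ω → H)
    (hZt : Zt = fun ω => (1 - t) • Z₀ ω + t • Z₁ ω)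
    (hUt : Ut = fun ω => Z₁ ω - Z₀ ω)
    (m : MeasurableSpace Ω)
    (hmdef : m = MeasurableSpace.comap Zt inferInstance ⊔ mC)
    (hm : m ≤ mΩ) :
    ∫ ω, ‖Ut ω - (μ[Ut|m]) ω‖ ^ 2 ∂μ ≤
      (1 - t)⁻¹ ^ 2 * ∫ ω, ‖Z₁ ω - (μ[Z₁|mC]) ω‖ ^ 2 ∂μ := by
  have hmC_le : mC ≤ m := hmdef ▸ le_sup_right
  have hZt_meas : Measurable[m] Zt := hmdef ▸ (comap_measurable Zt).mono le_sup_left le_rfl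
  have hZt_mem : MemLp Zt 2 μ := hZt ▸ (hZ₀.const_smul _).add (hZ₁.const_smul _)
  set g : Ω → H := fun ω => (1 - t)⁻¹ • (μ[Z₁|mC] ω - Zt ω)
  have hg_mem : MemLp g 2 μ := ((hZ₁.condExp one_le_two).sub hZt_mem).const_smul _
  have hg_meas : AEStronglyMeasurable[m] g μ :=
    ((stronglyMeasurable_condExp.mono hmC_le).aestronglyMeasurable.sub
      (hZt_mem.aestronglyMeasurable.of_measurable hZt_meas)).const_smul _
  have hUt_sub_g : ∀ ω, Ut ω - g ω = (1 - t)⁻¹ • (Z₁ ω - μ[Z₁|mC] ω) := by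
    have : 1 - t ≠ 0 := (sub_pos.mpr ht.2).ne'
    intro ω
    simp only [g, hUt, hZt]
    match_scalars <;> field_simp <;> ring
  calc ∫ ω, ‖Ut ω - μ[Ut|m] ω‖ ^ 2 ∂μ
      ≤ ∫ ω, ‖Ut ω - g ω‖ ^ 2 ∂μ :=
        integral_norm_sub_condExp_sq_le hm (hUt ▸ hZ₁.sub hZ₀) hg_mem hg_meas
    _ = (1 - t)⁻¹ ^ 2 * ∫ ω, ‖Z₁ ω - μ[Z₁|mC] ω‖ ^ 2 ∂μ := by
        simp only [hUt_sub_g, norm_smul, mul_pow, Real.norm_eq_abs, sq_abs, integral_const_mul]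

/-- Endpoint-concentration bound for flow matching: for `t ∈ (0,1)`, with interpolated state
`Z_t = (1-t)•Z₀ + t•Z₁`, target velocity `U_t = Z₁ - Z₀`, and conditioning σ-algebra
`m = σ(Z_t) ⊔ m_C`, the irreducible conditional variance of the velocity satisfies
`E‖U_t - E[U_t|m]‖² ≤ (1-t)⁻² * E‖Z₁ - E[Z₁|m_C]‖²`. -/
theorem flow_matching_irreducible_error_bound
    {Ω H : Type*} {mΩ : MeasurableSpace Ω} {μ : Measure Ω} [IsProbabilityMeasure μ]
    [NormedAddCommGroup H] [InnerProductSpace ℝ H] [CompleteSpace H]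
    [MeasurableSpace H] [BorelSpace H]
    {mC : MeasurableSpace Ω} (hmC : mC ≤ mΩ)
    {Z₀ Z₁ : Ω → H} (hZ₀ : MemLp Z₀ 2 μ) (hZ₁ : MemLp Z₁ 2 μ)
    {t : ℝ} (ht : t ∈ Set.Ioo (0 : ℝ) 1)
    (Zt Ut : Ω → H)
    (hZt : Zt = fun ω => (1 - t) • Z₀ ω + t • Z₁ ω)
    (hUt : Ut = fun ω => Z₁ ω - Z₀ ω)
    (m : MeasurableSpace Ω)
    (hmdef : m = MeasurableSpace.comap Zt inferInstance ⊔ mC)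
    (hm : m ≤ mΩ) :
    ∫ ω, ‖Ut ω - (μ[Ut|m]) ω‖ ^ 2 ∂μ ≤
      (1 - t)⁻¹ ^ 2 * ∫ ω, ‖Z₁ ω - (μ[Z₁|mC]) ω‖ ^ 2 ∂μ :=
  flow_matching_irreducible_error_bound_general hZ₀ hZ₁ ht Zt Ut hZt hUt m hmdef hm
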